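/- Let S be a bounded antilinear involution on an infinite-dimensional Hilbert space H. Then inf over S-crossable operators T of ‖T − 1‖ equals 1. In particular the S-crossable operators are not norm dense in B(H⊗H). -/

import Mathlib

noncomputable section
open scoped InnerProductSpace ComplexConjugate

variable {H K : Type*}

/-- A realization of the Hilbert space tensor square of `H` on a Hilbert space `K`. -/
structure TensorSquare (H K : Type*) [NormedAddCommGroup H] [InnerProductSpace ℂ H]
    [NormedAddCommGroup K] [InnerProductSpace ℂ K] : Type _ where
  tmul : H → H → K
  tmul_add_left : ∀ a a' b, tmul (a + a') b = tmul a b + tmul a' b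
  tmul_add_right : ∀ a b b', tmul a (b + b') = tmul a b + tmul a b'
  tmul_smul_left : ∀ (c : ℂ) a b, tmul (c • a) b = c • tmul a b
  tmul_smul_right : ∀ (c : ℂ) a b, tmul a (c • b) = c • tmul a b
  inner_tmul : ∀ a b c d, ⟪tmul a b, tmul c d⟫_ℂ = ⟪a, c⟫_ℂ * ⟪b, d⟫_ℂ
  dense_span : Dense (↑(Submodule.span ℂ (Set.range fun p : H × H => tmul p.1 p.2)) : Set K)

/-- A densely defined closed antilinear involution `S` on `H`, together with its adjoint `S*`. -/
structure AntiInvolution (H : Type*) [NormedAddCommGroup H] [InnerProductSpace ℂ H] : Type _ where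
  dom : Submodule ℂ H
  toFun : H → H
  dense_dom : Dense (dom : Set H)
  map_add : ∀ x ∈ dom, ∀ y ∈ dom, toFun (x + y) = toFun x + toFun y
  map_smul : ∀ (c : ℂ), ∀ x ∈ dom, toFun (c • x) = (starRingEnd ℂ c) • toFun x
  invol_mem : ∀ x ∈ dom, toFun x ∈ dom
  invol : ∀ x ∈ dom, toFun (toFun x) = x
  closed_graph : IsClosed {p : H × H | p.1 ∈ dom ∧ toFun p.1 = p.2}
  adjDom : Submodule ℂ H
  adjFun : H → H
  dense_adjDom : Dense (adjDom : Set H)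
  adj_spec : ∀ y ∈ adjDom, ∀ x ∈ dom, ⟪adjFun y, x⟫_ℂ = ⟪toFun x, y⟫_ℂ
  adj_max : ∀ y z : H, (∀ x ∈ dom, ⟪z, x⟫_ℂ = ⟪toFun x, y⟫_ℂ) → y ∈ adjDom

section
variable [NormedAddCommGroup H] [InnerProductSpace ℂ H]
  [NormedAddCommGroup K] [InnerProductSpace ℂ K]

/-- The crossing relation (unbounded `S`): `Tc = Cross_S(T)`. -/
def CrossRelU (τ : TensorSquare H K) (S : AntiInvolution H) (T Tc : K →L[ℂ] K) : Prop :=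
  ∀ φ₁ ∈ S.dom, ∀ ψ₁ ∈ S.dom, ∀ φ₂ ∈ S.adjDom, ∀ ψ₂ ∈ S.adjDom,
    ⟪τ.tmul φ₁ φ₂, Tc (τ.tmul ψ₁ ψ₂)⟫_ℂ
      = ⟪τ.tmul φ₂ (S.adjFun ψ₂), T (τ.tmul (S.toFun φ₁) ψ₁)⟫_ℂ

/-- The crossing relation for an everywhere defined (bounded) antilinear involution `S`
with adjoint `Sstar`. -/
def CrossRelB (τ : TensorSquare H K) (S Sstar : H →SL[starRingEnd ℂ] H) (T Tc : K →L[ℂ] K) :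
    Prop :=
  ∀ φ₁ φ₂ ψ₁ ψ₂ : H,
    ⟪τ.tmul φ₁ φ₂, Tc (τ.tmul ψ₁ ψ₂)⟫_ℂ = ⟪τ.tmul φ₂ (Sstar ψ₂), T (τ.tmul (S φ₁) ψ₁)⟫_ℂ

end

/-!
Let `c = ‖T - 1‖`, fix `y` with `S* y ≠ 0` and put `Ψ = S* y ⊗ y`. For an orthonormal family
`e₁, …, eₙ` and `Φ = ∑ eᵢ ⊗ S eᵢ`, the crossing relation turns `⟪Φ, Cross_S(T) Ψ⟫` into
`∑ ⟪vᵢ, T vᵢ⟫` with `vᵢ = S eᵢ ⊗ S* y`, whose real part is at least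
`(1 - c) ‖S* y‖² ∑ ‖S eᵢ‖² = (1 - c) ‖S* y‖² ‖Φ‖²`. Hence `(1 - c) ‖S* y‖² ‖Φ‖ ≤ ‖Cross_S(T) Ψ‖`.
Since `S` is an involution it is bounded below, so `‖Φ‖² ≥ n / ‖S‖²` is unbounded in infinite
dimension, forcing `c ≥ 1`; the value `1` is attained by `T = 0`.
-/

theorem exists_orthonormal_fin_of_not_finiteDimensional {𝕜 E : Type*} [RCLike 𝕜]
    [NormedAddCommGroup E] [InnerProductSpace 𝕜 E] (hE : ¬ FiniteDimensional 𝕜 E) (n : ℕ) :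
    ∃ e : Fin n → E, Orthonormal 𝕜 e := by
  have hrank : (n : Cardinal) ≤ Module.rank 𝕜 E :=
    Cardinal.natCast_lt_aleph0.le.trans (not_lt.mp (mt Module.rank_lt_aleph0_iff.mp hE))
  obtain ⟨f, hf⟩ := exists_linearIndependent_of_le_rank hrank
  exact ⟨InnerProductSpace.gramSchmidtNormed 𝕜 f,
    InnerProductSpace.gramSchmidtNormed_orthonormal hf⟩

theorem ContinuousLinearMap.norm_le_opNorm_mul_norm_apply_of_involutive {𝕜 E : Type*}
    [NontriviallyNormedField 𝕜] {σ : 𝕜 →+* 𝕜} [RingHomIsometric σ] [SeminormedAddCommGroup E]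
    [NormedSpace 𝕜 E] (S : E →SL[σ] E) (hS : Function.Involutive S) (x : E) :
    ‖x‖ ≤ ‖S‖ * ‖S x‖ := by
  simpa only [hS x] using S.le_opNorm (S x)

theorem ContinuousLinearMap.one_sub_norm_sub_one_mul_norm_sq_le_re_inner_apply {𝕜 E : Type*}
    [RCLike 𝕜] [NormedAddCommGroup E] [InnerProductSpace 𝕜 E] (T : E →L[𝕜] E) (v : E) :
    (1 - ‖T - 1‖) * ‖v‖ ^ 2 ≤ RCLike.re ⟪v, T v⟫_𝕜 := by
  have hsplit : RCLike.re ⟪v, T v⟫_𝕜 = ‖v‖ ^ 2 + RCLike.re ⟪v, (T - 1) v⟫_𝕜 := by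
    simp only [sub_apply, one_apply_eq_self, inner_sub_right, map_sub, inner_self_eq_norm_sq]
    ring
  have herr : -RCLike.re ⟪v, (T - 1) v⟫_𝕜 ≤ ‖T - 1‖ * ‖v‖ ^ 2 :=
    calc -RCLike.re ⟪v, (T - 1) v⟫_𝕜 ≤ ‖⟪v, (T - 1) v⟫_𝕜‖ := by
          simpa using RCLike.re_le_norm (-⟪v, (T - 1) v⟫_𝕜)
      _ ≤ ‖v‖ * ‖(T - 1) v‖ := norm_inner_le_norm _ _
      _ ≤ ‖v‖ * (‖T - 1‖ * ‖v‖) := by gcongr; exact (T - 1).le_opNorm v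
      _ = ‖T - 1‖ * ‖v‖ ^ 2 := by ring
  linarith

section

variable [NormedAddCommGroup H] [InnerProductSpace ℂ H]

theorem exists_apply_ne_zero_of_inner_adjoint [Nontrivial H] {S Sstar : H →SL[starRingEnd ℂ] H}
    (hS : Function.Involutive S) (hadj : ∀ x y : H, ⟪Sstar y, x⟫_ℂ = ⟪S x, y⟫_ℂ) :
    ∃ y, Sstar y ≠ 0 := by
  by_contra! h
  obtain ⟨x, hx⟩ := exists_ne (0 : H)
  have hSx : S x = 0 := inner_self_eq_zero.mp (by rw [← hadj, h, inner_zero_left])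
  exact hx (hS.injective (by rw [hSx, map_zero]))

variable [NormedAddCommGroup K] [InnerProductSpace ℂ K]

namespace TensorSquare

theorem norm_tmul (τ : TensorSquare H K) (a b : H) : ‖τ.tmul a b‖ = ‖a‖ * ‖b‖ := by
  have h : ‖τ.tmul a b‖ ^ 2 = (‖a‖ * ‖b‖) ^ 2 := by
    rw [mul_pow, ← inner_self_eq_norm_sq (𝕜 := ℂ), ← inner_self_eq_norm_sq (𝕜 := ℂ),
      ← inner_self_eq_norm_sq (𝕜 := ℂ), inner_self_re_eq_norm, inner_self_re_eq_norm,
      inner_self_re_eq_norm, τ.inner_tmul, norm_mul]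
  exact (pow_left_inj₀ (norm_nonneg _) (by positivity) two_ne_zero).mp h

theorem nontrivial [Nontrivial H] (τ : TensorSquare H K) : Nontrivial K := by
  obtain ⟨x, hx⟩ := exists_ne (0 : H)
  refine nontrivial_of_ne (τ.tmul x x) 0 fun h => hx ?_
  have hnorm := congrArg norm h
  rwa [τ.norm_tmul, norm_zero, mul_self_eq_zero, norm_eq_zero] at hnorm

theorem norm_sum_tmul_sq (τ : TensorSquare H K) {ι : Type*} (s : Finset ι) {e : ι → H}
    (he : Orthonormal ℂ e) (f : ι → H) :
    ‖∑ i ∈ s, τ.tmul (e i) (f i)‖ ^ 2 = ∑ i ∈ s, ‖f i‖ ^ 2 := by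
  classical
  rw [← inner_self_eq_norm_sq (𝕜 := ℂ)]
  simp only [sum_inner, inner_sum, τ.inner_tmul, orthonormal_iff_ite.mp he, ite_mul, one_mul,
    zero_mul, Finset.sum_ite_eq']
  rw [map_sum]
  exact Finset.sum_congr rfl fun i hi => by rw [if_pos hi, inner_self_eq_norm_sq]

theorem exists_orthonormal_lt_norm_sum_tmul_apply (τ : TensorSquare H K)
    (hinf : ¬ FiniteDimensional ℂ H) (S : H →SL[starRingEnd ℂ] H) (hS : Function.Involutive S)
    (R : ℝ) :
    ∃ (n : ℕ) (e : Fin n → H), Orthonormal ℂ e ∧ R < ‖∑ i, τ.tmul (e i) (S (e i))‖ := by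
  obtain ⟨n, hn⟩ := exists_nat_gt (‖S‖ ^ 2 * R ^ 2)
  obtain ⟨e, he⟩ := exists_orthonormal_fin_of_not_finiteDimensional hinf n
  refine ⟨n, e, he, ?_⟩
  by_contra! hle
  have hlower : (n : ℝ) ≤ ‖S‖ ^ 2 * ‖∑ i, τ.tmul (e i) (S (e i))‖ ^ 2 := by
    rw [τ.norm_sum_tmul_sq _ he, Finset.mul_sum]
    calc (n : ℝ) = ∑ i, ‖e i‖ ^ 2 := by simp [he.1]
      _ ≤ ∑ i, ‖S‖ ^ 2 * ‖S (e i)‖ ^ 2 := by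
        gcongr with i
        rw [← mul_pow]
        exact pow_le_pow_left₀ (norm_nonneg _)
          (S.norm_le_opNorm_mul_norm_apply_of_involutive hS _) 2
  have hupper : ‖∑ i, τ.tmul (e i) (S (e i))‖ ^ 2 ≤ R ^ 2 :=
    pow_le_pow_left₀ (norm_nonneg _) hle 2
  nlinarith [sq_nonneg ‖S‖]

end TensorSquare

namespace CrossRelB

variable {τ : TensorSquare H K} {S Sstar : H →SL[starRingEnd ℂ] H} {T Tc : K →L[ℂ] K}

theorem inner_sum_tmul_apply_eq (hrel : CrossRelB τ S Sstar T Tc) {ι : Type*} (s : Finset ι)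
    (e : ι → H) (y : H) :
    ⟪∑ i ∈ s, τ.tmul (e i) (S (e i)), Tc (τ.tmul (Sstar y) y)⟫_ℂ =
      ∑ i ∈ s, ⟪τ.tmul (S (e i)) (Sstar y), T (τ.tmul (S (e i)) (Sstar y))⟫_ℂ := by
  rw [sum_inner]
  exact Finset.sum_congr rfl fun i _ => hrel _ _ _ _

theorem mul_norm_sum_tmul_le (hrel : CrossRelB τ S Sstar T Tc) {ι : Type*} (s : Finset ι)
    {e : ι → H} (he : Orthonormal ℂ e) (y : H) :
    (1 - ‖T - 1‖) * ‖Sstar y‖ ^ 2 * ‖∑ i ∈ s, τ.tmul (e i) (S (e i))‖ ≤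
      ‖Tc (τ.tmul (Sstar y) y)‖ := by
  set Φ := ∑ i ∈ s, τ.tmul (e i) (S (e i))
  set Ψ := τ.tmul (Sstar y) y
  have hlower : (1 - ‖T - 1‖) * ‖Sstar y‖ ^ 2 * ‖Φ‖ ^ 2 ≤ RCLike.re ⟪Φ, Tc Ψ⟫_ℂ := by
    rw [hrel.inner_sum_tmul_apply_eq, map_sum, τ.norm_sum_tmul_sq s he, Finset.mul_sum]
    gcongr with i
    calc (1 - ‖T - 1‖) * ‖Sstar y‖ ^ 2 * ‖S (e i)‖ ^ 2
        = (1 - ‖T - 1‖) * ‖τ.tmul (S (e i)) (Sstar y)‖ ^ 2 := by rw [τ.norm_tmul]; ring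
      _ ≤ _ := T.one_sub_norm_sub_one_mul_norm_sq_le_re_inner_apply _
  have hupper : RCLike.re ⟪Φ, Tc Ψ⟫_ℂ ≤ ‖Φ‖ * ‖Tc Ψ‖ := re_inner_le_norm _ _
  rcases (norm_nonneg Φ).eq_or_lt with hΦ | hΦ
  · rw [← hΦ, mul_zero]
    exact norm_nonneg _
  · exact le_of_mul_le_mul_right (by nlinarith) hΦ

theorem one_le_norm_sub_one (hinf : ¬ FiniteDimensional ℂ H) (hS : Function.Involutive S)
    (hadj : ∀ x y : H, ⟪Sstar y, x⟫_ℂ = ⟪S x, y⟫_ℂ) (hrel : CrossRelB τ S Sstar T Tc) :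
    1 ≤ ‖T - 1‖ := by
  by_contra! hlt
  have : Nontrivial H := not_subsingleton_iff_nontrivial.mp fun _ => hinf inferInstance
  obtain ⟨y, hy⟩ := exists_apply_ne_zero_of_inner_adjoint hS hadj
  have hC : 0 < (1 - ‖T - 1‖) * ‖Sstar y‖ ^ 2 := by
    have : 0 < ‖Sstar y‖ := norm_pos_iff.mpr hy
    have : 0 < 1 - ‖T - 1‖ := by linarith
    positivity
  obtain ⟨n, e, he, hR⟩ := τ.exists_orthonormal_lt_norm_sum_tmul_apply hinf S hS
    (‖Tc (τ.tmul (Sstar y) y)‖ / ((1 - ‖T - 1‖) * ‖Sstar y‖ ^ 2))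
  rw [div_lt_iff₀' hC] at hR
  linarith [hrel.mul_norm_sum_tmul_le Finset.univ he y]

end CrossRelB

end

theorem dist_one_to_crossable_general
    [NormedAddCommGroup H] [InnerProductSpace ℂ H]
    [NormedAddCommGroup K] [InnerProductSpace ℂ K]
    (hinf : ¬ FiniteDimensional ℂ H)
    (τ : TensorSquare H K)
    (S Sstar : H →SL[starRingEnd ℂ] H)
    (hinv : ∀ x : H, S (S x) = x)
    (hadj : ∀ x y : H, ⟪Sstar y, x⟫_ℂ = ⟪S x, y⟫_ℂ) :
    sInf {r : ℝ | ∃ T Tc : K →L[ℂ] K, CrossRelB τ S Sstar T Tc ∧ r = ‖T - 1‖} = 1 ∧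
    ¬ Dense {T : K →L[ℂ] K | ∃ Tc : K →L[ℂ] K, CrossRelB τ S Sstar T Tc} := by
  have : Nontrivial H := not_subsingleton_iff_nontrivial.mp fun _ => hinf inferInstance
  have : Nontrivial K := τ.nontrivial
  have hzero : CrossRelB τ S Sstar 0 0 := fun _ _ _ _ => by simp
  have hle {T Tc : K →L[ℂ] K} (hrel : CrossRelB τ S Sstar T Tc) : 1 ≤ ‖T - 1‖ :=
    hrel.one_le_norm_sub_one hinf hinv hadj
  refine ⟨IsLeast.csInf_eq ⟨⟨0, 0, hzero, by simp⟩, ?_⟩, fun hdense => ?_⟩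
  · rintro r ⟨T, Tc, hrel, rfl⟩
    exact hle hrel
  · obtain ⟨T, ⟨Tc, hrel⟩, hT⟩ := hdense.exists_dist_lt (1 : K →L[ℂ] K) one_pos
    rw [dist_comm, dist_eq_norm] at hT
    exact (hle hrel).not_gt hT

/-- For a bounded antilinear involution `S` on an infinite-dimensional
Hilbert space, the infimum of `‖T - 1‖` over all `S`-crossable `T` equals `1`; in particular
the crossable operators are not norm dense in `B(H ⊗ H)`. -/
theorem dist_one_to_crossable
    [NormedAddCommGroup H] [InnerProductSpace ℂ H] [CompleteSpace H]
    [SecondCountableTopology H]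
    [NormedAddCommGroup K] [InnerProductSpace ℂ K] [CompleteSpace K]
    (hinf : ¬ FiniteDimensional ℂ H)
    (τ : TensorSquare H K)
    (S Sstar : H →SL[starRingEnd ℂ] H)
    (hinv : ∀ x : H, S (S x) = x)
    (hadj : ∀ x y : H, ⟪Sstar y, x⟫_ℂ = ⟪S x, y⟫_ℂ) :
    sInf {r : ℝ | ∃ T Tc : K →L[ℂ] K, CrossRelB τ S Sstar T Tc ∧ r = ‖T - 1‖} = 1 ∧
    ¬ Dense {T : K →L[ℂ] K | ∃ Tc : K →L[ℂ] K, CrossRelB τ S Sstar T Tc} :=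
  dist_one_to_crossable_general hinf τ S Sstar hinv hadj
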